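/- Let Ω_S ⊆ ℝ² be a bounded open set, B ⊆ ∂Ω_S (the outer boundary ∂Ω_S∖Γ), ν > 0, ω₁ a Borel probability measure on Ω_S, and ω₂ a Borel probability measure on B. Suppose u_S : ℝ² → ℝ² is C² and p_S : ℝ² → ℝ is C¹ on a neighborhood of the closure of Ω_S, with −νΔu_S + ∇p_S = f_S and div u_S = 0 on Ω_S, and u_S = 0 on B. Fix q₃, q₄ ≥ 0. Then there exists a constant C ≥ 0, depending only on ν, q₃, q₄ and sup_{closure Ω_S} |p_S|, such that for every ε ∈ (0,1] and every C² vector field U_S : ℝ² → ℝ² and C¹ function P_S : ℝ² → ℝ satisfying, for all x in the closure of Ω_S: (i) |∂^α U_S(x) − ∂^α u_S(x)| ≤ ε componentwise for every multi-index α with |α| ≤ 2, (ii) |P_S(x) − p_S(x)| ≤ ε, and (iii) ‖∇P_S(x) − ∇p_S(x)‖ ≤ (|P_S(x)|^{q₃/2} + |p_S(x)|^{q₄/2}) · |P_S(x) − p_S(x)|, one has ∫_{Ω_S} ‖f_S + νΔU_S − ∇P_S‖² dω₁ + ∫_{Ω_S} |div U_S|² dω₁ + ∫_B ‖U_S‖²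 dω₂ ≤ C ε². -/

import Mathlib

open MeasureTheory

noncomputable section

/-- Standard basis vector of `ℝ² = EuclideanSpace ℝ (Fin 2)`. -/
def ee (i : Fin 2) : EuclideanSpace ℝ (Fin 2) := EuclideanSpace.single i 1

/-- Divergence of a vector field on `ℝ²`: trace of the Fréchet derivative. -/
def vdiv (v : EuclideanSpace ℝ (Fin 2) → EuclideanSpace ℝ (Fin 2))
    (x : EuclideanSpace ℝ (Fin 2)) : ℝ :=
  ∑ i : Fin 2, fderiv ℝ v x (ee i) i

/-- Componentwise Laplacian of a vector field on `ℝ²`: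
the sum of the pure second partial derivatives. -/
def vlap (v : EuclideanSpace ℝ (Fin 2) → EuclideanSpace ℝ (Fin 2))
    (x : EuclideanSpace ℝ (Fin 2)) : EuclideanSpace ℝ (Fin 2) :=
  ∑ j : Fin 2, iteratedFDeriv ℝ 2 v x ![ee j, ee j]

/-!
Subtracting the exact Stokes system, the three residuals become `ν (ΔUS - ΔuS) - (∇PS - ∇pS)`,
`div US - div uS` and `US - uS`, pointwise on the closure of `ΩS`. Hypothesis (i) bounds the
velocity differences by multiples of `ε`. By (ii), `|PS| ≤ M + 1` where `M` bounds `|pS|` on the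
compact set `closure ΩS`, so (iii) bounds the pressure-gradient difference by
`((M + 1) ^ (q₃ / 2) + M ^ (q₄ / 2)) ε`. Squaring and integrating against probability measures
gives `C ε²`.
-/

local notation "ℝ²" => EuclideanSpace ℝ (Fin 2)

lemma norm_sum_le_card_mul {ι E : Type*} [Fintype ι] [SeminormedAddCommGroup E]
    {d : ι → E} {c : ℝ} (h : ∀ i, ‖d i‖ ≤ c) : ‖∑ i, d i‖ ≤ Fintype.card ι * c :=
  (norm_sum_le _ _).trans <|
    (Finset.sum_le_card_nsmul _ _ _ fun i _ => h i).trans_eq (by simp [nsmul_eq_mul])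

lemma EuclideanSpace.norm_le_card_mul {𝕜 ι : Type*} [RCLike 𝕜] [Fintype ι]
    {v : EuclideanSpace 𝕜 ι} {c : ℝ} (h : ∀ i, ‖v i‖ ≤ c) : ‖v‖ ≤ Fintype.card ι * c := by
  have hl1 : ‖v‖ ≤ ∑ i, ‖v i‖ := by
    rw [EuclideanSpace.norm_eq, Real.sqrt_le_iff]
    exact ⟨by positivity, Finset.sum_sq_le_sq_sum_of_nonneg fun i _ => norm_nonneg _⟩
  simpa only [Finset.card_univ, nsmul_eq_mul] using
    hl1.trans (Finset.sum_le_card_nsmul _ _ _ fun i _ => h i)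

lemma ContDiffAt.iteratedFDeriv_component {𝕜 ι E : Type*} [RCLike 𝕜] [Fintype ι]
    [NormedAddCommGroup E] [NormedSpace 𝕜 E] {f : E → EuclideanSpace 𝕜 ι} {x : E}
    {n : WithTop ℕ∞} (hf : ContDiffAt 𝕜 n f x) {k : ℕ} (hk : k ≤ n) (i : ι) (m : Fin k → E) :
    iteratedFDeriv 𝕜 k (fun y => f y i) x m = iteratedFDeriv 𝕜 k f x m i :=
  congr($((EuclideanSpace.proj i).iteratedFDeriv_comp_left hf hk) m)

def PartialDerivsClose (k : ℕ) (U u : ℝ² → ℝ²) (x : ℝ²) (ε : ℝ) : Prop :=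
  ∀ (m : Fin k → Fin 2) (i : Fin 2),
    |iteratedFDeriv ℝ k (fun y => U y i) x (fun j => ee (m j)) -
      iteratedFDeriv ℝ k (fun y => u y i) x (fun j => ee (m j))| ≤ ε

namespace PartialDerivsClose

variable {U u : ℝ² → ℝ²} {x : ℝ²} {ε : ℝ}

lemma norm_sub_le (h : PartialDerivsClose 0 U u x ε) : ‖U x - u x‖ ≤ 2 * ε := by
  simpa using EuclideanSpace.norm_le_card_mul (v := U x - u x) fun i => by simpa using h Fin.elim0 i

lemma abs_vdiv_sub_le (hU : ContDiffAt ℝ 1 U x) (hu : ContDiffAt ℝ 1 u x)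
    (h : PartialDerivsClose 1 U u x ε) : |vdiv U x - vdiv u x| ≤ 2 * ε := by
  have hpartial (f : ℝ² → ℝ²) (hf : ContDiffAt ℝ 1 f x) (i : Fin 2) :
      fderiv ℝ f x (ee i) i = iteratedFDeriv ℝ 1 (fun y => f y i) x (fun _ => ee i) := by
    rw [hf.iteratedFDeriv_component le_rfl, iteratedFDeriv_one_apply]
  have hterm (i : Fin 2) : ‖fderiv ℝ U x (ee i) i - fderiv ℝ u x (ee i) i‖ ≤ ε := by
    rw [hpartial U hU, hpartial u hu]
    exact h (fun _ => i) i
  rw [← Real.norm_eq_abs, vdiv, vdiv, ← Finset.sum_sub_distrib]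
  exact (norm_sum_le_card_mul hterm).trans_eq (by norm_num)

lemma norm_vlap_sub_le (hU : ContDiffAt ℝ 2 U x) (hu : ContDiffAt ℝ 2 u x)
    (h : PartialDerivsClose 2 U u x ε) : ‖vlap U x - vlap u x‖ ≤ 4 * ε := by
  have hpartial (f : ℝ² → ℝ²) (hf : ContDiffAt ℝ 2 f x) (i j : Fin 2) :
      iteratedFDeriv ℝ 2 f x ![ee j, ee j] i =
        iteratedFDeriv ℝ 2 (fun y => f y i) x (fun _ => ee j) := by
    have hdiag : ![ee j, ee j] = fun _ => ee j := by
      funext k; fin_cases k <;> rfl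
    rw [hf.iteratedFDeriv_component le_rfl, hdiag]
  have hcomp (i : Fin 2) : ‖(vlap U x - vlap u x) i‖ ≤ 2 * ε := by
    have hterm (j : Fin 2) : ‖iteratedFDeriv ℝ 2 U x ![ee j, ee j] i -
        iteratedFDeriv ℝ 2 u x ![ee j, ee j] i‖ ≤ ε := by
      rw [hpartial U hU, hpartial u hu]
      exact h (fun _ => j) i
    have hsum : (vlap U x - vlap u x) i = ∑ j, (iteratedFDeriv ℝ 2 U x ![ee j, ee j] i -
        iteratedFDeriv ℝ 2 u x ![ee j, ee j] i) := by
      simp [vlap, Finset.sum_sub_distrib]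
    rw [hsum]
    exact (norm_sum_le_card_mul hterm).trans_eq (by norm_num)
  exact (EuclideanSpace.norm_le_card_mul hcomp).trans_eq (by norm_num; ring)

end PartialDerivsClose

lemma norm_momentum_residual_le {E : Type*} [SeminormedAddCommGroup E] [NormedSpace ℝ E]
    {ν : ℝ} {f l L g G : E} (hmom : -ν • l + g = f) :
    ‖f + ν • L - G‖ ≤ ‖ν‖ * ‖L - l‖ + ‖G - g‖ := by
  have hres : f + ν • L - G = ν • (L - l) - (G - g) := by
    rw [← hmom]; module
  rw [hres, ← norm_smul]
  exact norm_sub_le _ _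

lemma le_of_le_rpow_add_rpow_mul_abs_sub {d P p M ε a b : ℝ} (ha : 0 ≤ a) (hb : 0 ≤ b)
    (hp : |p| ≤ M) (hPp : |P - p| ≤ ε) (hε : ε ≤ 1)
    (hd : d ≤ (|P| ^ a + |p| ^ b) * |P - p|) : d ≤ ((M + 1) ^ a + M ^ b) * ε := by
  have hP : |P| ≤ M + 1 := by linarith [abs_sub_abs_le_abs_sub P p]
  have hfactor : |P| ^ a + |p| ^ b ≤ (M + 1) ^ a + M ^ b :=
    add_le_add (Real.rpow_le_rpow (abs_nonneg _) hP ha) (Real.rpow_le_rpow (abs_nonneg _) hp hb)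
  have hK : 0 ≤ (M + 1) ^ a + M ^ b :=
    (add_nonneg (by positivity) (by positivity)).trans hfactor
  exact hd.trans (mul_le_mul hfactor hPp (abs_nonneg _) hK)

lemma setIntegral_norm_sq_le {X E : Type*} [MeasurableSpace X] [NormedAddCommGroup E]
    {μ : Measure X} [IsProbabilityMeasure μ] {s : Set X} {f : X → E} {c : ℝ}
    (h : ∀ x ∈ s, ‖f x‖ ≤ c) : ∫ x in s, ‖f x‖ ^ 2 ∂μ ≤ c ^ 2 := by
  have hsq (x) (hx : x ∈ s) : ‖‖f x‖ ^ 2‖ ≤ c ^ 2 := by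
    rw [norm_pow, norm_norm]
    exact pow_le_pow_left₀ (norm_nonneg _) (h x hx) 2
  calc ∫ x in s, ‖f x‖ ^ 2 ∂μ ≤ ‖∫ x in s, ‖f x‖ ^ 2 ∂μ‖ := Real.le_norm_self _
    _ ≤ c ^ 2 * μ.real s := norm_setIntegral_le_of_norm_le_const (measure_lt_top μ s) hsq
    _ ≤ c ^ 2 := mul_le_of_le_one_right (sq_nonneg c) measureReal_le_one

theorem stokes_loss_estimate_general
    (ΩS B : Set (EuclideanSpace ℝ (Fin 2)))
    (hΩbdd : Bornology.IsBounded ΩS)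
    (hB : B ⊆ frontier ΩS)
    (ν : ℝ)
    (ω₁ ω₂ : Measure (EuclideanSpace ℝ (Fin 2)))
    [IsProbabilityMeasure ω₁] [IsProbabilityMeasure ω₂]
    (uS : EuclideanSpace ℝ (Fin 2) → EuclideanSpace ℝ (Fin 2))
    (pS : EuclideanSpace ℝ (Fin 2) → ℝ)
    (fS : EuclideanSpace ℝ (Fin 2) → EuclideanSpace ℝ (Fin 2))
    -- `uS` is C² and `pS` is C¹ on an open neighborhood `V` of the closure of `ΩS`
    (V : Set (EuclideanSpace ℝ (Fin 2))) (hVopen : IsOpen V) (hVnbhd : closure ΩS ⊆ V)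
    (huS : ContDiffOn ℝ 2 uS V) (hpS : ContDiffOn ℝ 1 pS V)
    -- the exact Stokes system
    (hmom : ∀ x ∈ ΩS, -ν • vlap uS x + gradient pS x = fS x)
    (hdiv : ∀ x ∈ ΩS, vdiv uS x = 0)
    (hbc : ∀ x ∈ B, uS x = 0)
    (q₃ q₄ : ℝ) (hq₃ : 0 ≤ q₃) (hq₄ : 0 ≤ q₄) :
    ∃ C : ℝ, 0 ≤ C ∧
      ∀ ε : ℝ, 0 < ε → ε ≤ 1 →
      ∀ (US : EuclideanSpace ℝ (Fin 2) → EuclideanSpace ℝ (Fin 2))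
        (PS : EuclideanSpace ℝ (Fin 2) → ℝ),
        ContDiff ℝ 2 US → ContDiff ℝ 1 PS →
        -- (i) all partial derivatives up to order 2 are ε-close, componentwise
        (∀ x ∈ closure ΩS, ∀ k : ℕ, k ≤ 2 → ∀ m : Fin k → Fin 2, ∀ i : Fin 2,
          |iteratedFDeriv ℝ k (fun y => US y i) x (fun j => ee (m j)) -
            iteratedFDeriv ℝ k (fun y => uS y i) x (fun j => ee (m j))| ≤ ε) →
        -- (ii) the pressures are ε-close
        (∀ x ∈ closure ΩS, |PS x - pS x| ≤ ε) →
        -- (iii) polynomial-growth Lipschitz bound for the pressure gradient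
        (∀ x ∈ closure ΩS,
          ‖gradient PS x - gradient pS x‖ ≤
            (|PS x| ^ (q₃ / 2) + |pS x| ^ (q₄ / 2)) * |PS x - pS x|) →
        (∫ x in ΩS, ‖fS x + ν • vlap US x - gradient PS x‖ ^ 2 ∂ω₁) +
          (∫ x in ΩS, (vdiv US x) ^ 2 ∂ω₁) +
          (∫ x in B, ‖US x‖ ^ 2 ∂ω₂) ≤ C * ε ^ 2 := by
  obtain ⟨M, hM⟩ := hΩbdd.isCompact_closure.exists_bound_of_continuousOn
    (hpS.continuousOn.mono hVnbhd)
  set K := (M + 1) ^ (q₃ / 2) + M ^ (q₄ / 2)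
  refine ⟨(4 * ‖ν‖ + K) ^ 2 + 2 ^ 2 + 2 ^ 2, by positivity, ?_⟩
  intro ε _ hε1 US PS hUS _ hi hii hiii
  have huS_at {x} (hx : x ∈ closure ΩS) : ContDiffAt ℝ 2 uS x :=
    huS.contDiffAt (hVopen.mem_nhds (hVnbhd hx))
  have hres (x) (hx : x ∈ ΩS) :
      ‖fS x + ν • vlap US x - gradient PS x‖ ≤ (4 * ‖ν‖ + K) * ε := by
    have hx' := subset_closure hx
    have hlap :=
      PartialDerivsClose.norm_vlap_sub_le hUS.contDiffAt (huS_at hx') (hi x hx' 2 le_rfl)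
    have hgrad : ‖gradient PS x - gradient pS x‖ ≤ K * ε :=
      le_of_le_rpow_add_rpow_mul_abs_sub (by linarith) (by linarith) (by simpa using hM x hx')
        (hii x hx') hε1 (hiii x hx')
    linarith [norm_momentum_residual_le (L := vlap US x) (G := gradient PS x) (hmom x hx),
      mul_le_mul_of_nonneg_left hlap (norm_nonneg ν)]
  have hdivU (x) (hx : x ∈ ΩS) : ‖vdiv US x‖ ≤ 2 * ε := by
    have hx' := subset_closure hx
    simpa [hdiv x hx] using PartialDerivsClose.abs_vdiv_sub_le (hUS.contDiffAt.of_le one_le_two)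
      ((huS_at hx').of_le one_le_two) (hi x hx' 1 one_le_two)
  have hbcU (x) (hx : x ∈ B) : ‖US x‖ ≤ 2 * ε := by
    simpa [hbc x hx] using
      PartialDerivsClose.norm_sub_le (hi x (frontier_subset_closure (hB hx)) 0 zero_le_two)
  have I₁ := setIntegral_norm_sq_le (μ := ω₁) hres
  have I₂ := setIntegral_norm_sq_le (μ := ω₁) hdivU
  have I₃ := setIntegral_norm_sq_le (μ := ω₂) hbcU
  simp only [Real.norm_eq_abs, sq_abs] at I₂
  rw [mul_pow] at I₁ I₂ I₃
  linarith

/-- Estimate (24): the Stokes part of the CDNN loss is `O(ε²)` for any approximant that is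
uniformly `ε`-close (with derivatives up to order 2) to an exact Stokes solution. -/
theorem stokes_loss_estimate
    (ΩS B : Set (EuclideanSpace ℝ (Fin 2)))
    (hΩopen : IsOpen ΩS) (hΩbdd : Bornology.IsBounded ΩS)
    (hB : B ⊆ frontier ΩS)
    (ν : ℝ) (hν : 0 < ν)
    (ω₁ ω₂ : Measure (EuclideanSpace ℝ (Fin 2)))
    [IsProbabilityMeasure ω₁] [IsProbabilityMeasure ω₂]
    (hω₁ : ω₁ ΩS = 1) (hω₂ : ω₂ B = 1)
    (uS : EuclideanSpace ℝ (Fin 2) → EuclideanSpace ℝ (Fin 2))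
    (pS : EuclideanSpace ℝ (Fin 2) → ℝ)
    (fS : EuclideanSpace ℝ (Fin 2) → EuclideanSpace ℝ (Fin 2))
    -- `uS` is C² and `pS` is C¹ on an open neighborhood `V` of the closure of `ΩS`
    (V : Set (EuclideanSpace ℝ (Fin 2))) (hVopen : IsOpen V) (hVnbhd : closure ΩS ⊆ V)
    (huS : ContDiffOn ℝ 2 uS V) (hpS : ContDiffOn ℝ 1 pS V)
    -- the exact Stokes system
    (hmom : ∀ x ∈ ΩS, -ν • vlap uS x + gradient pS x = fS x)
    (hdiv : ∀ x ∈ ΩS, vdiv uS x = 0)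
    (hbc : ∀ x ∈ B, uS x = 0)
    (q₃ q₄ : ℝ) (hq₃ : 0 ≤ q₃) (hq₄ : 0 ≤ q₄) :
    ∃ C : ℝ, 0 ≤ C ∧
      ∀ ε : ℝ, 0 < ε → ε ≤ 1 →
      ∀ (US : EuclideanSpace ℝ (Fin 2) → EuclideanSpace ℝ (Fin 2))
        (PS : EuclideanSpace ℝ (Fin 2) → ℝ),
        ContDiff ℝ 2 US → ContDiff ℝ 1 PS →
        -- (i) all partial derivatives up to order 2 are ε-close, componentwise
        (∀ x ∈ closure ΩS, ∀ k : ℕ, k ≤ 2 → ∀ m : Fin k → Fin 2, ∀ i : Fin 2,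
          |iteratedFDeriv ℝ k (fun y => US y i) x (fun j => ee (m j)) -
            iteratedFDeriv ℝ k (fun y => uS y i) x (fun j => ee (m j))| ≤ ε) →
        -- (ii) the pressures are ε-close
        (∀ x ∈ closure ΩS, |PS x - pS x| ≤ ε) →
        -- (iii) polynomial-growth Lipschitz bound for the pressure gradient
        (∀ x ∈ closure ΩS,
          ‖gradient PS x - gradient pS x‖ ≤
            (|PS x| ^ (q₃ / 2) + |pS x| ^ (q₄ / 2)) * |PS x - pS x|) →
        (∫ x in ΩS, ‖fS x + ν • vlap US x - gradient PS x‖ ^ 2 ∂ω₁) +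
          (∫ x in ΩS, (vdiv US x) ^ 2 ∂ω₁) +
          (∫ x in B, ‖US x‖ ^ 2 ∂ω₂) ≤ C * ε ^ 2 :=
  stokes_loss_estimate_general ΩS B hΩbdd hB ν ω₁ ω₂ uS pS fS V hVopen hVnbhd huS hpS hmom hdiv hbc
    q₃ q₄ hq₃ hq₄

end
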